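/- For all integers q and m with q ≥ m + 2 and m ≥ 3, the inequality [m−1 over 1]_q · [m over 1]_q^{m−1} + [m−1 over 1]_q² · [2m−3 over m−2]_q < q^{m(m−1)} holds. -/

import Mathlib

/-!
Each factor `(q^(n-i) - 1)/(q^(m-i) - 1)` of `[n over m]_q` is at most `q^(n-m+1)/(q-1)`. With
`A = q^(m-1)/(q-1)` and `B = q^m/(q-1)` the left-hand side is therefore at most
`A B^(m-1) + A² B^(m-2) = q^(m(m-1)) · q^(m-2)(q+1)/(q-1)^m`, and Bernoulli's inequality gives
`(q-1)^m ≥ q^(m-1)(q-m) ≥ 2q^(m-1) > q^(m-2)(q+1)` as soon as `q ≥ m + 2`.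
-/

/-- The Gaussian binomial coefficient `[n over m]_q`, as a rational number. -/
def gaussBinom (q n m : ℕ) : ℚ :=
  ∏ i ∈ Finset.range m, ((q : ℚ) ^ (n - i) - 1) / ((q : ℚ) ^ (m - i) - 1)

section OrderedField

variable {K : Type*} [Field K] [LinearOrder K] [IsStrictOrderedRing K]

/-- Bernoulli's inequality for `1 - 1/Q`, cleared of denominators. -/
lemma pow_mul_sub_le_sub_one_pow {Q : K} (hQ : 1 ≤ Q) (n : ℕ) :
    Q ^ n * (Q - (n + 1)) ≤ (Q - 1) ^ (n + 1) := by
  have hQ₀ : 0 < Q := by linarith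
  have hBernoulli := one_add_mul_le_pow (a := -Q⁻¹) (by linarith [inv_le_one_of_one_le₀ hQ]) (n + 1)
  calc Q ^ n * (Q - (n + 1)) = Q ^ (n + 1) * (1 + (n + 1 : ℕ) * -Q⁻¹) := by
        field_simp; push_cast; ring
    _ ≤ Q ^ (n + 1) * (1 + -Q⁻¹) ^ (n + 1) := by gcongr
    _ = (Q - 1) ^ (n + 1) := by rw [← mul_pow]; congr 1; field_simp; ring

lemma pow_mul_add_one_lt_sub_one_pow {Q : K} {k : ℕ} (hQ : k + 4 ≤ Q) :
    Q ^ k * (Q + 1) < (Q - 1) ^ (k + 2) := by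
  have hk : (0 : K) ≤ k := Nat.cast_nonneg k
  have hpos : 0 < Q ^ k := pow_pos (by linarith) k
  calc Q ^ k * (Q + 1) < Q ^ k * (Q * 2) := by gcongr; linarith
    _ ≤ Q ^ k * (Q * (Q - (k + 1 + 1))) := by gcongr <;> linarith
    _ = Q ^ (k + 1) * (Q - ((k + 1 : ℕ) + 1)) := by push_cast; ring
    _ ≤ (Q - 1) ^ (k + 2) := pow_mul_sub_le_sub_one_pow (by linarith) (k + 1)

lemma mul_pow_add_sq_mul_pow_lt {Q : K} {k : ℕ} (hQ : k + 4 ≤ Q) :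
    Q ^ (k + 1) / (Q - 1) * (Q ^ (k + 2) / (Q - 1)) ^ (k + 1) +
      (Q ^ (k + 1) / (Q - 1)) ^ 2 * (Q ^ (k + 2) / (Q - 1)) ^ k < Q ^ ((k + 2) * (k + 1)) := by
  have hk : (0 : K) ≤ k := Nat.cast_nonneg k
  have hQ₁ : 0 < Q - 1 := by linarith
  calc _ = (Q ^ (k + 1) / (Q - 1)) ^ (k + 2) * (Q ^ k * (Q + 1)) := by ring
    _ = Q ^ ((k + 2) * (k + 1)) * (Q ^ k * (Q + 1) / (Q - 1) ^ (k + 2)) := by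
        rw [div_pow, ← pow_mul]; ring
    _ < Q ^ ((k + 2) * (k + 1)) * 1 := by
        gcongr
        · exact pow_pos (by linarith) _
        · exact (div_lt_one (by positivity)).2 (pow_mul_add_one_lt_sub_one_pow hQ)
    _ = Q ^ ((k + 2) * (k + 1)) := mul_one _

lemma pow_sub_one_div_pow_sub_one_nonneg {Q : K} (hQ : 1 ≤ Q) (a b : ℕ) :
    0 ≤ (Q ^ a - 1) / (Q ^ b - 1) :=
  div_nonneg (sub_nonneg.2 (one_le_pow₀ hQ)) (sub_nonneg.2 (one_le_pow₀ hQ))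

lemma pow_add_sub_one_div_pow_sub_one_le {Q : K} (hQ : 1 < Q) {b : ℕ} (hb : 1 ≤ b) (c : ℕ) :
    (Q ^ (b + c) - 1) / (Q ^ b - 1) ≤ Q ^ (c + 1) / (Q - 1) := by
  rw [div_le_div_iff₀ (by linarith [one_lt_pow₀ hQ (by omega : b ≠ 0)]) (by linarith)]
  obtain ⟨b, rfl⟩ : ∃ b', b = b' + 1 := ⟨b - 1, by omega⟩
  have h₁ : 1 ≤ Q ^ b := one_le_pow₀ hQ.le
  have h₂ : 0 ≤ Q ^ (c + 1) := by positivity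
  have hsplit : Q ^ (b + 1 + c) = Q ^ (c + 1) * Q ^ b := by rw [← pow_add]; ring_nf
  -- the difference of the two sides is `Q ^ (c + 1) * (Q ^ b - 1) + (Q - 1)`
  nlinarith [mul_nonneg h₂ (sub_nonneg.2 h₁), pow_succ Q b]

end OrderedField

lemma gaussBinom_nonneg {q : ℕ} (hq : 1 ≤ q) (n m : ℕ) : 0 ≤ gaussBinom q n m :=
  Finset.prod_nonneg fun _ _ => pow_sub_one_div_pow_sub_one_nonneg (by exact_mod_cast hq) _ _

lemma gaussBinom_one (q n : ℕ) : gaussBinom q n 1 = ((q : ℚ) ^ n - 1) / (q - 1) := by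
  simp [gaussBinom]

lemma gaussBinom_one_le {q : ℕ} (hq : 2 ≤ q) (n : ℕ) :
    gaussBinom q n 1 ≤ (q : ℚ) ^ n / (q - 1) := by
  have hQ : (2 : ℚ) ≤ q := by exact_mod_cast hq
  rw [gaussBinom_one]
  gcongr <;> linarith

lemma gaussBinom_le_pow {q n m : ℕ} (hq : 2 ≤ q) (hmn : m ≤ n) :
    gaussBinom q n m ≤ ((q : ℚ) ^ (n - m + 1) / (q - 1)) ^ m := by
  have hQ : (1 : ℚ) < q := by exact_mod_cast hq
  rw [gaussBinom, ← Finset.card_range m, ← Finset.prod_const, Finset.card_range]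
  refine Finset.prod_le_prod (fun _ _ => pow_sub_one_div_pow_sub_one_nonneg hQ.le _ _)
    fun i hi => ?_
  have hi : i < m := Finset.mem_range.1 hi
  rw [show n - i = (m - i) + (n - m) by omega]
  exact pow_add_sub_one_div_pow_sub_one_le hQ (by omega) _

theorem stmt13 {q m : ℕ} (hqm : m + 2 ≤ q) (hm : 3 ≤ m) :
    gaussBinom q (m - 1) 1 * gaussBinom q m 1 ^ (m - 1) +
        gaussBinom q (m - 1) 1 ^ 2 * gaussBinom q (2 * m - 3) (m - 2) <
      (q : ℚ) ^ (m * (m - 1)) := by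
  obtain ⟨k, rfl⟩ : ∃ k, m = k + 2 := ⟨m - 2, by omega⟩
  rw [show k + 2 - 1 = k + 1 by omega, show 2 * (k + 2) - 3 = 2 * k + 1 by omega,
    show k + 2 - 2 = k by omega]
  have hq : 2 ≤ q := by omega
  have hA₁ := gaussBinom_one_le hq (k + 1)
  have hA₂ := gaussBinom_one_le hq (k + 2)
  have hB : gaussBinom q (2 * k + 1) k ≤ ((q : ℚ) ^ (k + 2) / (q - 1)) ^ k := by
    simpa [show 2 * k + 1 - k + 1 = k + 2 by omega] using
      gaussBinom_le_pow hq (by omega : k ≤ 2 * k + 1)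
  have h₀ := gaussBinom_nonneg (q := q) (by omega)
  calc _ ≤ (q : ℚ) ^ (k + 1) / (q - 1) * ((q : ℚ) ^ (k + 2) / (q - 1)) ^ (k + 1) +
        ((q : ℚ) ^ (k + 1) / (q - 1)) ^ 2 * ((q : ℚ) ^ (k + 2) / (q - 1)) ^ k :=
      add_le_add
        (mul_le_mul hA₁ (pow_le_pow_left₀ (h₀ _ _) hA₂ _) (pow_nonneg (h₀ _ _) _)
          ((h₀ _ _).trans hA₁))
        (mul_le_mul (pow_le_pow_left₀ (h₀ _ _) hA₁ 2) hB (h₀ _ _) (by positivity))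
    _ < _ := mul_pow_add_sq_mul_pow_lt (by exact_mod_cast hqm)
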